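/- Let n ≥ 2 and let X be a ℤ₂ⁿ-equivariant triangulation of the sphere S^{n−1} in ℝⁿ with exactly 2n vertices. Then every vertex of X has at most two nonzero coordinates. -/

import Mathlib

open Set

noncomputable section

/-- The sign-change map `x ↦ (ε₁x₁, …, εₙxₙ)` on `EuclideanSpace ℝ (Fin n)`. -/
def signMap {n : ℕ} (ε : Fin n → ℝ) (x : EuclideanSpace ℝ (Fin n)) :
    EuclideanSpace ℝ (Fin n) :=
  WithLp.toLp 2 (fun i => ε i * x i)

/-- `X` is a `ℤ₂ⁿ`-equivariant triangulation of the unit sphere `S^{n-1} ⊆ ℝⁿ`. -/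
structure IsEquivSphereTriangulation (n : ℕ)
    (X : Geometry.SimplicialComplex ℝ (EuclideanSpace ℝ (Fin n))) : Prop where
  finite : X.faces.Finite
  zero_not_mem : (0 : EuclideanSpace ℝ (Fin n)) ∉ X.space
  radial_homeo : ∃ φ : X.space ≃ₜ (Metric.sphere (0 : EuclideanSpace ℝ (Fin n)) 1),
      ∀ x : X.space, (φ x : EuclideanSpace ℝ (Fin n)) =
        ‖(x : EuclideanSpace ℝ (Fin n))‖⁻¹ • (x : EuclideanSpace ℝ (Fin n))
  equivariant : ∀ ε : Fin n → ℝ, (∀ i, ε i = 1 ∨ ε i = -1) →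
      ∀ s ∈ X.faces, ∃ t ∈ X.faces,
        (t : Set (EuclideanSpace ℝ (Fin n))) = signMap ε '' (s : Set (EuclideanSpace ℝ (Fin n)))

/-! Every vertex `v` of `X` lies in the sign orbit of `|v|`, which consists of `2 ^ k` vertices,
`k` being the number of nonzero coordinates of `v`. Since `|X|` covers the sphere, each coordinate
is nonzero at some vertex, so the supports of the orbits cover all `n` coordinates and, summing
over the orbits, `2n ≤ ∑ 2k ≤ ∑ 2 ^ k = #V(X) = 2n`. As `2k < 2 ^ k` once `k ≥ 3`, no orbit
has `k ≥ 3`. -/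

open Finset

theorem two_mul_le_two_pow (k : ℕ) : 2 * k ≤ 2 ^ k := by
  rcases k with _ | k
  · simp
  · rw [pow_succ']
    have := k.lt_two_pow_self
    omega

theorem two_mul_lt_two_pow {k : ℕ} (hk : 3 ≤ k) : 2 * k < 2 ^ k := by
  obtain ⟨m, rfl⟩ : ∃ m, k = m + 3 := ⟨k - 3, by omega⟩
  rw [pow_add]
  have := m.lt_two_pow_self
  omega

section SignOrbit

variable {n : ℕ}

def coordAbs (v : EuclideanSpace ℝ (Fin n)) : Fin n → ℝ := fun i => |v i|

def signOrbit (v : EuclideanSpace ℝ (Fin n)) : Finset (EuclideanSpace ℝ (Fin n)) :=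
  (Fintype.piFinset fun i => ({v i, -v i} : Finset ℝ)).image (WithLp.toLp 2)

theorem mem_signOrbit {v w : EuclideanSpace ℝ (Fin n)} :
    w ∈ signOrbit v ↔ coordAbs w = coordAbs v := by
  simp only [signOrbit, Finset.mem_image, Fintype.mem_piFinset, Finset.mem_insert,
    Finset.mem_singleton, funext_iff, coordAbs, abs_eq_abs]
  constructor
  · rintro ⟨u, hu, rfl⟩
    exact hu
  · exact fun h => ⟨WithLp.ofLp w, h, rfl⟩

theorem card_signOrbit (v : EuclideanSpace ℝ (Fin n)) :
    #(signOrbit v) = 2 ^ #{i | v i ≠ 0} := by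
  rw [signOrbit, Finset.card_image_of_injective _ (WithLp.toLp_injective 2),
    Fintype.card_piFinset]
  have hpair (a : ℝ) : #({a, -a} : Finset ℝ) = if a ≠ 0 then 2 else 1 := by
    split_ifs with ha
    · exact Finset.card_pair (by grind)
    · simp [not_not.mp ha]
  rw [prod_congr rfl fun i _ => hpair (v i), prod_ite, prod_const, prod_const, one_pow, mul_one]

theorem card_support_coordAbs (v : EuclideanSpace ℝ (Fin n)) :
    #{i | coordAbs v i ≠ 0} = #{i | v i ≠ 0} := by
  simp only [coordAbs, ne_eq, abs_eq_zero]

theorem card_eq_sum_two_pow_of_signOrbit_subset {V : Finset (EuclideanSpace ℝ (Fin n))}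
    (hV : ∀ v ∈ V, signOrbit v ⊆ V) :
    #V = ∑ a ∈ V.image coordAbs, 2 ^ #{i | a i ≠ 0} := by
  rw [card_eq_sum_card_image coordAbs V]
  refine sum_congr rfl fun a ha => ?_
  obtain ⟨v, hv, rfl⟩ := Finset.mem_image.1 ha
  have hfiber : {w ∈ V | coordAbs w = coordAbs v} = signOrbit v := by
    ext w
    rw [Finset.mem_filter, mem_signOrbit, and_iff_right_iff_imp]
    exact fun hw => hV v hv (mem_signOrbit.2 hw)
  rw [hfiber, card_signOrbit, card_support_coordAbs]

theorem le_sum_card_support_of_forall_exists_ne_zero {V : Finset (EuclideanSpace ℝ (Fin n))}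
    (hcover : ∀ i, ∃ v ∈ V, v i ≠ 0) :
    n ≤ ∑ a ∈ V.image coordAbs, #{i | a i ≠ 0} := by
  have hunion : (V.image coordAbs).biUnion (fun a => {i | a i ≠ 0}) = Finset.univ := by
    refine Finset.eq_univ_of_forall fun i => ?_
    obtain ⟨v, hv, hvi⟩ := hcover i
    simp only [Finset.mem_biUnion, Finset.mem_image, Finset.mem_filter, Finset.mem_univ, true_and]
    exact ⟨coordAbs v, ⟨v, hv, rfl⟩, by simpa [coordAbs] using hvi⟩
  calc n = #((V.image coordAbs).biUnion fun a => {i | a i ≠ 0}) := by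
        rw [hunion, card_univ, Fintype.card_fin]
    _ ≤ _ := card_biUnion_le

theorem card_support_le_two_of_signOrbit_subset {V : Finset (EuclideanSpace ℝ (Fin n))}
    (hV : ∀ v ∈ V, signOrbit v ⊆ V) (hcover : ∀ i, ∃ v ∈ V, v i ≠ 0) (hcard : #V ≤ 2 * n) :
    ∀ v ∈ V, #{i | v i ≠ 0} ≤ 2 := by
  intro v hv
  by_contra! hv3
  have hlt : ∑ a ∈ V.image coordAbs, 2 * #{i | a i ≠ 0} <
      ∑ a ∈ V.image coordAbs, 2 ^ #{i | a i ≠ 0} := by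
    refine sum_lt_sum (fun a _ => two_mul_le_two_pow _) ⟨coordAbs v, mem_image_of_mem _ hv, ?_⟩
    exact two_mul_lt_two_pow (by rw [card_support_coordAbs]; omega)
  rw [← mul_sum, ← card_eq_sum_two_pow_of_signOrbit_subset hV] at hlt
  have := le_sum_card_support_of_forall_exists_ne_zero hcover
  omega

end SignOrbit

namespace Geometry.SimplicialComplex

variable {𝕜 E : Type*} [Ring 𝕜] [PartialOrder 𝕜] [AddCommGroup E] [Module 𝕜 E]
  {K : SimplicialComplex 𝕜 E}

theorem finite_vertices (hK : K.faces.Finite) : K.vertices.Finite := by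
  rw [vertices_eq]
  exact hK.biUnion fun s _ => s.finite_toSet

theorem exists_mem_vertices_apply_ne_zero [IsOrderedRing 𝕜] {M : Type*} [AddCommGroup M]
    [Module 𝕜 M] (f : E →ₗ[𝕜] M) {x : E} (hx : x ∈ K.space)
    (hfx : f x ≠ 0) : ∃ v ∈ K.vertices, f v ≠ 0 := by
  by_contra! hker
  obtain ⟨s, hs, hxs⟩ := mem_space_iff.1 hx
  have hsker : (s : Set E) ⊆ LinearMap.ker f := fun v hv =>
    hker v (K.down_closed hs (Finset.singleton_subset_iff.2 hv) (Finset.singleton_nonempty v))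
  exact hfx (convexHull_min hsker (LinearMap.ker f).convex hxs)

end Geometry.SimplicialComplex

namespace IsEquivSphereTriangulation

variable {n : ℕ} {X : Geometry.SimplicialComplex ℝ (EuclideanSpace ℝ (Fin n))}

theorem signOrbit_subset_vertices (hX : IsEquivSphereTriangulation n X)
    {v : EuclideanSpace ℝ (Fin n)} (hv : v ∈ X.vertices) : ↑(signOrbit v) ⊆ X.vertices := by
  intro w hw
  have hw : ∀ i, w i = v i ∨ w i = -v i := fun i =>
    abs_eq_abs.1 (congrFun (mem_signOrbit.1 hw) i)
  set ε : Fin n → ℝ := fun i => if w i = v i then 1 else -1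
  have hε : ∀ i, ε i = 1 ∨ ε i = -1 := fun i => by
    by_cases h : w i = v i <;> simp [ε, h]
  have hεv : signMap ε v = w := by
    ext i
    change ε i * v i = w i
    by_cases h : w i = v i
    · simp [ε, h]
    · rw [show ε i = -1 from if_neg h, (hw i).resolve_left h]
      ring
  obtain ⟨t, ht, hteq⟩ := hX.equivariant ε hε {v} hv
  rw [Finset.coe_singleton, Set.image_singleton, hεv, Finset.coe_eq_singleton] at hteq
  rwa [Geometry.SimplicialComplex.mem_vertices, ← hteq]

theorem exists_mem_vertices_apply_ne_zero (hX : IsEquivSphereTriangulation n X) (i : Fin n) :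
    ∃ v ∈ X.vertices, v i ≠ 0 := by
  obtain ⟨φ, hφ⟩ := hX.radial_homeo
  obtain ⟨x, hx⟩ := φ.surjective ⟨EuclideanSpace.single i 1, by simp⟩
  have hxe : ‖(x : EuclideanSpace ℝ (Fin n))‖⁻¹ • (x : EuclideanSpace ℝ (Fin n)) =
      EuclideanSpace.single i 1 := by
    rw [← hφ x, hx]
  have hxi : ‖(x : EuclideanSpace ℝ (Fin n))‖⁻¹ * x.1 i = 1 := by
    simpa using congrArg (· i) hxe
  exact X.exists_mem_vertices_apply_ne_zero (EuclideanSpace.proj i).toLinearMap x.2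
    (right_ne_zero_of_mul_eq_one hxi)

end IsEquivSphereTriangulation

theorem stmt3_general (n : ℕ)
    (X : Geometry.SimplicialComplex ℝ (EuclideanSpace ℝ (Fin n)))
    (hX : IsEquivSphereTriangulation n X)
    (hcard : X.vertices.ncard = 2 * n) :
    ∀ v ∈ X.vertices, {i : Fin n | v i ≠ 0}.ncard ≤ 2 := by
  have hfin := Geometry.SimplicialComplex.finite_vertices hX.finite
  intro v hv
  rw [Set.ncard_eq_toFinset_card', Set.toFinset_ofPred]
  refine card_support_le_two_of_signOrbit_subset (V := hfin.toFinset) (fun w hw => ?_)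
    (fun i => ?_) ?_ v (hfin.mem_toFinset.2 hv)
  · rw [← Finset.coe_subset, Set.Finite.coe_toFinset]
    exact hX.signOrbit_subset_vertices (hfin.mem_toFinset.1 hw)
  · simpa using hX.exists_mem_vertices_apply_ne_zero i
  · rw [← hcard, Set.ncard_eq_toFinset_card _ hfin]

theorem stmt3 (n : ℕ) (hn : 2 ≤ n)
    (X : Geometry.SimplicialComplex ℝ (EuclideanSpace ℝ (Fin n)))
    (hX : IsEquivSphereTriangulation n X)
    (hcard : X.vertices.ncard = 2 * n) :
    ∀ v ∈ X.vertices, {i : Fin n | v i ≠ 0}.ncard ≤ 2 :=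
  stmt3_general n X hX hcard
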